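/- Let v ∈ [0,1)^𝑁, u ∈ [0,1], and let y : [0,∞) → [0,1] be a differentiable function with y(0) = u and y'(t) = B_𝑁(y(t), v) + B̄_𝑁(y(t)) for all t ≥ 0. If u < ρ(v), then y is monotone increasing on [0,∞) and y(t) → ρ(v) as t → ∞; if u > ρ(v), then y is monotone decreasing on [0,∞) and y(t) → ρ(v) as t → ∞; if u = ρ(v), then y(t) = ρ(v) for every t ≥ 0. -/

import Mathlib

/-!
Write `P w = ∑ c_j w^j` for the right-hand side of the equation, where `c_j = b_j v_j` for
`j ∈ N` and `c_j = b_j` otherwise. All coefficients except `c_1` are nonnegative, so `P` is convex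
on `[0, 1]`; moreover `P 0 = c_0 ≥ 0` and `P 1 = ∑ c_j = ∑_{j ∈ N} b_j (v_j - 1) < 0`. Hence `P` is
positive on `[0, ρ)` and, by convexity, negative on `(ρ, 1]`: `ρ` is an attracting equilibrium
of `y' = P y`. A trajectory starting below `ρ` can never cross it (after the last time it is
`≤ ρ` it would be decreasing), so it is increasing and converges; its limit is an equilibrium by
the mean value theorem, hence equals `ρ`. The case of a start above `ρ` is the same argument for
`-y`, which solves `(-y)' = -P(-(-y))`.
-/

open Set Filter Topology

theorem MonotoneOn.tendsto_atTop_of_isLUB {α β : Type*} [Preorder α] [IsDirectedOrder α]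
    [TopologicalSpace β] [Preorder β] [SupConvergenceClass β] {f : α → β} {a : α} {L : β}
    (hf : MonotoneOn f (Ici a)) (hL : IsLUB (f '' Ici a) L) : Tendsto f atTop (𝓝 L) := by
  rw [← tendsto_comp_val_Ici_atTop (a := a)]
  refine tendsto_atTop_isLUB (fun s t hst => hf s.2 t.2 hst) ?_
  rwa [image_eq_range] at hL

theorem le_of_hasDerivAt_nonpos_above {f f' : ℝ → ℝ} {a b c : ℝ} (hab : a ≤ b)
    (hf : ContinuousOn f (Icc a b)) (hf' : ∀ x ∈ Ioo a b, HasDerivAt f (f' x) x)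
    (hsign : ∀ x ∈ Ioo a b, c < f x → f' x ≤ 0) (ha : f a ≤ c) : f b ≤ c := by
  set S := Icc a b ∩ f ⁻¹' Iic c
  have hS : IsClosed S := hf.preimage_isClosed_of_isClosed isClosed_Icc isClosed_Iic
  have hSa : a ∈ S := ⟨left_mem_Icc.2 hab, ha⟩
  obtain ⟨⟨ht₀a, ht₀b⟩, ht₀⟩ : sSup S ∈ S :=
    hS.csSup_mem ⟨a, hSa⟩ (bddAbove_Icc.mono inter_subset_left)
  -- `f > c` on `(sSup S, b]`, so `f` decreases there
  have hanti : AntitoneOn f (Icc (sSup S) b) := by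
    refine antitoneOn_of_hasDerivWithinAt_nonpos (f' := f') (convex_Icc _ _)
      (hf.mono (Icc_subset_Icc ht₀a le_rfl)) (fun x hx => ?_) fun x hx => ?_
    · rw [interior_Icc] at hx
      exact (hf' x ⟨ht₀a.trans_lt hx.1, hx.2⟩).hasDerivWithinAt
    · rw [interior_Icc] at hx
      refine hsign x ⟨ht₀a.trans_lt hx.1, hx.2⟩ (lt_of_not_ge fun hxc => hx.1.not_ge ?_)
      exact le_csSup (bddAbove_Icc.mono inter_subset_left) ⟨⟨ht₀a.trans hx.1.le, hx.2.le⟩, hxc⟩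
  exact (hanti (left_mem_Icc.2 ht₀b) (right_mem_Icc.2 ht₀b) ht₀b).trans ht₀

theorem eq_zero_of_tendsto_of_tendsto_deriv {f f' : ℝ → ℝ} {a L l : ℝ}
    (hf : ∀ t, a < t → HasDerivAt f (f' t) t) (hL : Tendsto f atTop (𝓝 L))
    (hl : Tendsto f' atTop (𝓝 l)) : l = 0 := by
  have hmvt : ∀ t, ∃ ξ, t < ξ ∧ (a < t → f' ξ = f (t + 1) - f t) := by
    intro t
    by_cases ht : a < t
    · obtain ⟨ξ, hξ, hξeq⟩ := exists_hasDerivAt_eq_slope f f' (lt_add_one t)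
        (fun x hx => (hf x (ht.trans_le hx.1)).continuousAt.continuousWithinAt)
        fun x hx => hf x (ht.trans hx.1)
      exact ⟨ξ, hξ.1, fun _ => by rwa [add_sub_cancel_left, div_one] at hξeq⟩
    · exact ⟨t + 1, lt_add_one t, fun h => absurd h ht⟩
  choose ξ hξ hξeq using hmvt
  have hξ_tendsto : Tendsto ξ atTop atTop := tendsto_atTop_mono (fun t => (hξ t).le) tendsto_id
  have hdiff : Tendsto (fun t => f (t + 1) - f t) atTop (𝓝 (L - L)) :=
    (hL.comp (tendsto_atTop_add_const_right _ 1 tendsto_id)).sub hL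
  rw [sub_self] at hdiff
  refine tendsto_nhds_unique (hl.comp hξ_tendsto) (hdiff.congr' ?_)
  filter_upwards [eventually_gt_atTop a] with t ht using (hξeq t ht).symm

theorem ConvexOn.tsum {E ι : Type*} [AddCommGroup E] [Module ℝ E] {s : Set E} {f : ι → E → ℝ}
    (hs : Convex ℝ s) (hf : ∀ i, ConvexOn ℝ s (f i)) (hsum : ∀ x ∈ s, Summable fun i => f i x) :
    ConvexOn ℝ s fun x => ∑' i, f i x := by
  refine ⟨hs, fun x hx y hy α β hα hβ hαβ => ?_⟩
  simp only [smul_eq_mul]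
  rw [← tsum_mul_left, ← tsum_mul_left,
    ← ((hsum x hx).mul_left α).tsum_add ((hsum y hy).mul_left β)]
  exact (hsum _ (hs hx hy hα hβ hαβ)).tsum_le_tsum (fun i => (hf i).2 hx hy hα hβ hαβ)
    (((hsum x hx).mul_left α).add ((hsum y hy).mul_left β))

theorem convexOn_mul_pow {c : ℝ} {j : ℕ} (h : j = 1 ∨ 0 ≤ c) :
    ConvexOn ℝ (Ici 0) fun w : ℝ => c * w ^ j := by
  rcases h with rfl | hc
  · refine ⟨convex_Ici 0, fun x _ y _ α β _ _ _ => le_of_eq ?_⟩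
    simp only [smul_eq_mul, pow_one]
    ring
  · exact (convexOn_pow j).smul hc

section PowerSeries

variable {c : ℕ → ℝ}

theorem summable_mul_pow (hc : Summable c) {w : ℝ} (hw : |w| ≤ 1) :
    Summable fun j => c j * w ^ j :=
  (summable_abs_iff.2 hc).of_norm_bounded fun j => by
    rw [norm_mul, norm_pow, Real.norm_eq_abs, Real.norm_eq_abs]
    exact mul_le_of_le_one_right (abs_nonneg _) (pow_le_one₀ (abs_nonneg _) hw)

theorem continuousOn_tsum_mul_pow (hc : Summable c) :
    ContinuousOn (fun w => ∑' j, c j * w ^ j) (Icc (-1) 1) :=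
  continuousOn_tsum (fun j => by fun_prop) (summable_abs_iff.2 hc) fun j w hw => by
    rw [norm_mul, norm_pow, Real.norm_eq_abs, Real.norm_eq_abs]
    exact mul_le_of_le_one_right (abs_nonneg _) (pow_le_one₀ (abs_nonneg _) (abs_le.2 hw))

theorem convexOn_tsum_mul_pow (hc : Summable c) (hc_nonneg : ∀ j ≠ 1, 0 ≤ c j) :
    ConvexOn ℝ (Icc 0 1) fun w => ∑' j, c j * w ^ j :=
  ConvexOn.tsum (convex_Icc 0 1)
    (fun j => (convexOn_mul_pow ((em (j = 1)).imp_right (hc_nonneg j))).subset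
      Icc_subset_Ici_self (convex_Icc 0 1))
    fun w hw => summable_mul_pow hc (abs_le.2 ⟨by linarith [hw.1], hw.2⟩)

theorem tsum_mul_zero_pow : ∑' j, c j * (0 : ℝ) ^ j = c 0 := by
  rw [tsum_eq_single 0 fun j hj => by simp [hj]]
  simp

end PowerSeries

section Coefficients

variable {b v : ℕ → ℝ} {N : Finset ℕ}

theorem HasSum.ite_mem_mul {s : ℝ} (hb : HasSum b s) :
    HasSum (fun j => if j ∈ N then b j * v j else b j) (s + ∑ j ∈ N, b j * (v j - 1)) := by
  have hN : HasSum (fun j => if j ∈ N then b j * (v j - 1) else 0)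
      (∑ j ∈ N, if j ∈ N then b j * (v j - 1) else 0) :=
    hasSum_sum_of_ne_finset_zero fun j hj => if_neg hj
  rw [Finset.sum_congr rfl fun j hj => if_pos hj] at hN
  convert hb.add hN using 1
  ext j
  split_ifs <;> ring

theorem tsum_ite_mem_add_sum {w : ℝ} (hb : Summable fun j => b j * w ^ j) :
    (∑' j, if j ∈ N then 0 else b j * w ^ j) + ∑ j ∈ N, b j * v j * w ^ j =
      ∑' j, (if j ∈ N then b j * v j else b j) * w ^ j := by
  have hout : Summable fun j => if j ∈ N then 0 else b j * w ^ j := by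
    refine (hb.indicator (↑N)ᶜ).congr fun j => ?_
    by_cases hj : j ∈ N <;> simp [hj]
  have hin : HasSum (fun j => if j ∈ N then b j * v j * w ^ j else 0)
      (∑ j ∈ N, if j ∈ N then b j * v j * w ^ j else 0) :=
    hasSum_sum_of_ne_finset_zero fun j hj => if_neg hj
  rw [Finset.sum_congr rfl fun j hj => if_pos hj] at hin
  rw [← hin.tsum_eq, ← hout.tsum_add hin.summable]
  congr 1
  ext j
  split_ifs <;> ring

end Coefficients

theorem neg_trajectory {F y : ℝ → ℝ} {a b : ℝ}
    (hy : ∀ t, 0 ≤ t → HasDerivWithinAt y (F (y t)) (Ici 0) t)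
    (hmem : ∀ t, 0 ≤ t → y t ∈ Icc a b) :
    (∀ t, 0 ≤ t → HasDerivWithinAt (-y) ((fun w => -F (-w)) ((-y) t)) (Ici 0) t) ∧
      ∀ t, 0 ≤ t → (-y) t ∈ Icc (-b) (-a) :=
  ⟨fun t ht => by simpa using (hy t ht).neg,
    fun t ht => ⟨neg_le_neg (hmem t ht).2, neg_le_neg (hmem t ht).1⟩⟩

structure IsStableEquilibriumOn (F : ℝ → ℝ) (a b ρ : ℝ) : Prop where
  continuousOn : ContinuousOn F (Icc a b)
  apply_eq_zero : F ρ = 0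
  pos_of_lt : ∀ w ∈ Ico a ρ, 0 < F w
  neg_of_gt : ∀ w ∈ Ioc ρ b, F w < 0

namespace IsStableEquilibriumOn

variable {F y : ℝ → ℝ} {a b ρ : ℝ}

theorem neg_comp_neg (hF : IsStableEquilibriumOn F a b ρ) :
    IsStableEquilibriumOn (fun w => -F (-w)) (-b) (-a) (-ρ) where
  continuousOn := (hF.continuousOn.comp continuousOn_neg fun w hw =>
    ⟨le_neg.1 hw.2, neg_le.1 hw.1⟩).neg
  apply_eq_zero := by simp [hF.apply_eq_zero]
  pos_of_lt w hw := neg_pos.2 (hF.neg_of_gt (-w) ⟨lt_neg.1 hw.2, neg_le.1 hw.1⟩)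
  neg_of_gt w hw := neg_neg_iff_pos.2 (hF.pos_of_lt (-w) ⟨le_neg.1 hw.2, neg_lt.1 hw.1⟩)

theorem le_of_le (hF : IsStableEquilibriumOn F a b ρ)
    (hy : ∀ t, 0 ≤ t → HasDerivWithinAt y (F (y t)) (Ici 0) t)
    (hmem : ∀ t, 0 ≤ t → y t ∈ Icc a b) (h0 : y 0 ≤ ρ) (t : ℝ) (ht : 0 ≤ t) : y t ≤ ρ :=
  le_of_hasDerivAt_nonpos_above ht
    (fun s hs => (hy s hs.1).continuousWithinAt.mono Icc_subset_Ici_self)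
    (fun s hs => (hy s hs.1.le).hasDerivAt (Ici_mem_nhds hs.1))
    (fun s hs hρs => (hF.neg_of_gt _ ⟨hρs, (hmem s hs.1.le).2⟩).le) h0

theorem monotoneOn_of_le (hF : IsStableEquilibriumOn F a b ρ)
    (hy : ∀ t, 0 ≤ t → HasDerivWithinAt y (F (y t)) (Ici 0) t)
    (hmem : ∀ t, 0 ≤ t → y t ∈ Icc a b) (h0 : y 0 ≤ ρ) : MonotoneOn y (Ici 0) := by
  refine monotoneOn_of_hasDerivWithinAt_nonneg (f' := fun t => F (y t)) (convex_Ici 0)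
    (fun t ht => (hy t ht).continuousWithinAt) (fun t ht => ?_) fun t ht => ?_
  · rw [interior_Ici] at ht ⊢
    exact ((hy t ht.le).hasDerivAt (Ici_mem_nhds ht)).hasDerivWithinAt
  · rw [interior_Ici] at ht
    rcases (hF.le_of_le hy hmem h0 t ht.le).lt_or_eq with hlt | heq
    · exact (hF.pos_of_lt _ ⟨(hmem t ht.le).1, hlt⟩).le
    · rw [heq, hF.apply_eq_zero]

theorem tendsto_of_le (hF : IsStableEquilibriumOn F a b ρ)
    (hy : ∀ t, 0 ≤ t → HasDerivWithinAt y (F (y t)) (Ici 0) t)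
    (hmem : ∀ t, 0 ≤ t → y t ∈ Icc a b) (h0 : y 0 ≤ ρ) : Tendsto y atTop (𝓝 ρ) := by
  obtain ⟨L, hL⟩ : ∃ L, IsLUB (y '' Ici 0) L :=
    ⟨_, isLUB_csSup (nonempty_Ici.image y) ⟨ρ, forall_mem_image.2 (hF.le_of_le hy hmem h0)⟩⟩
  have hyL := (hF.monotoneOn_of_le hy hmem h0).tendsto_atTop_of_isLUB hL
  have hLρ : L ≤ ρ := hL.2 (forall_mem_image.2 (hF.le_of_le hy hmem h0))
  have haL : a ≤ L := (hmem 0 le_rfl).1.trans (hL.1 (mem_image_of_mem y self_mem_Ici))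
  have hbL : L ≤ b := hL.2 (forall_mem_image.2 fun t ht => (hmem t ht).2)
  have hFL : F L = 0 := by
    refine eq_zero_of_tendsto_of_tendsto_deriv (f := y) (a := 0)
      (fun t ht => (hy t ht.le).hasDerivAt (Ici_mem_nhds ht)) hyL ?_
    refine ((hF.continuousOn L ⟨haL, hbL⟩).tendsto).comp (tendsto_nhdsWithin_iff.2 ⟨hyL, ?_⟩)
    filter_upwards [eventually_ge_atTop 0] with t ht using hmem t ht
  rcases hLρ.lt_or_eq with hlt | rfl
  · exact absurd hFL (hF.pos_of_lt L ⟨haL, hlt⟩).ne'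
  · exact hyL

theorem ge_of_ge (hF : IsStableEquilibriumOn F a b ρ)
    (hy : ∀ t, 0 ≤ t → HasDerivWithinAt y (F (y t)) (Ici 0) t)
    (hmem : ∀ t, 0 ≤ t → y t ∈ Icc a b) (h0 : ρ ≤ y 0) (t : ℝ) (ht : 0 ≤ t) : ρ ≤ y t := by
  obtain ⟨hy', hmem'⟩ := neg_trajectory hy hmem
  simpa using hF.neg_comp_neg.le_of_le hy' hmem' (neg_le_neg h0) t ht

theorem antitoneOn_of_ge (hF : IsStableEquilibriumOn F a b ρ)
    (hy : ∀ t, 0 ≤ t → HasDerivWithinAt y (F (y t)) (Ici 0) t)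
    (hmem : ∀ t, 0 ≤ t → y t ∈ Icc a b) (h0 : ρ ≤ y 0) : AntitoneOn y (Ici 0) := by
  obtain ⟨hy', hmem'⟩ := neg_trajectory hy hmem
  simpa using (hF.neg_comp_neg.monotoneOn_of_le hy' hmem' (neg_le_neg h0)).neg

theorem tendsto_of_ge (hF : IsStableEquilibriumOn F a b ρ)
    (hy : ∀ t, 0 ≤ t → HasDerivWithinAt y (F (y t)) (Ici 0) t)
    (hmem : ∀ t, 0 ≤ t → y t ∈ Icc a b) (h0 : ρ ≤ y 0) : Tendsto y atTop (𝓝 ρ) := by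
  obtain ⟨hy', hmem'⟩ := neg_trajectory hy hmem
  simpa using (hF.neg_comp_neg.tendsto_of_le hy' hmem' (neg_le_neg h0)).neg

end IsStableEquilibriumOn

theorem isStableEquilibriumOn_of_convexOn {P : ℝ → ℝ} {a b ρ : ℝ}
    (hcont : ContinuousOn P (Icc a b)) (hconv : ConvexOn ℝ (Icc a b) P) (ha : 0 ≤ P a)
    (hb : P b < 0) (hρ : IsLeast {w | w ∈ Icc a b ∧ P w = 0} ρ) :
    IsStableEquilibriumOn P a b ρ where
  continuousOn := hcont
  apply_eq_zero := hρ.1.2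
  pos_of_lt w hw := by
    have hwb : w ≤ b := hw.2.le.trans hρ.1.1.2
    refine lt_of_not_ge fun hPw => hw.2.not_ge ?_
    obtain ⟨z, hz, hPz⟩ := intermediate_value_Icc' hw.1 (hcont.mono (Icc_subset_Icc le_rfl hwb))
      ⟨hPw, ha⟩
    exact (hρ.2 ⟨⟨hz.1, hz.2.trans hwb⟩, hPz⟩).trans hz.2
  neg_of_gt w hw := by
    refine lt_of_not_ge fun hPw => hb.not_ge ?_
    have hbmem : b ∈ Icc a b := right_mem_Icc.2 (hρ.1.1.1.trans (hw.1.le.trans hw.2))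
    exact hPw.trans (hconv.le_right_of_left_le'' hρ.1.1 hbmem hw.1 hw.2 (hρ.1.2.trans_le hPw))

theorem stmt_7_general
    (b : ℕ → ℝ)
    (hb_nonneg : ∀ j : ℕ, j ≠ 1 → 0 ≤ b j)
    (hb_sum : HasSum (fun j : ℕ => if j = 1 then 0 else b j) (-(b 1)))
    (N : Finset ℕ) (hN : N.Nonempty)
    (hbN : ∀ k ∈ N, 0 < b k)
    (v : ℕ → ℝ) (hv : ∀ j ∈ N, v j ∈ Set.Ico (0 : ℝ) 1)
    (u : ℝ)
    (ρv : ℝ)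
    (hρv : IsLeast {w : ℝ | w ∈ Set.Icc (0 : ℝ) 1 ∧
        (∑' j : ℕ, if j ∈ N then 0 else b j * w ^ j)
          + (∑ j ∈ N, b j * v j * w ^ j) = 0} ρv)
    (y : ℝ → ℝ)
    (hy0 : y 0 = u)
    (hymem : ∀ t : ℝ, 0 ≤ t → y t ∈ Set.Icc (0 : ℝ) 1)
    (hyderiv : ∀ t : ℝ, 0 ≤ t →
      HasDerivWithinAt y
        ((∑ j ∈ N, b j * v j * (y t) ^ j)
          + (∑' j : ℕ, if j ∈ N then 0 else b j * (y t) ^ j))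
        (Set.Ici (0 : ℝ)) t) :
    (u < ρv → MonotoneOn y (Set.Ici (0 : ℝ)) ∧
      Filter.Tendsto y Filter.atTop (nhds ρv)) ∧
    (ρv < u → AntitoneOn y (Set.Ici (0 : ℝ)) ∧
      Filter.Tendsto y Filter.atTop (nhds ρv)) ∧
    (u = ρv → ∀ t : ℝ, 0 ≤ t → y t = ρv) := by
  subst hy0
  set c : ℕ → ℝ := fun j => if j ∈ N then b j * v j else b j
  set P : ℝ → ℝ := fun w => ∑' j, c j * w ^ j
  have hb : HasSum b 0 := by
    convert hb_sum.add (hasSum_ite_eq 1 (b 1)) using 1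
    · ext j
      split_ifs <;> simp_all
    · ring
  have hc : HasSum c (∑ j ∈ N, b j * (v j - 1)) := by simpa using hb.ite_mem_mul
  have hc_nonneg : ∀ j ≠ 1, 0 ≤ c j := fun j hj => by
    by_cases hjN : j ∈ N
    · simpa [c, hjN] using mul_nonneg (hbN j hjN).le (hv j hjN).1
    · simpa [c, hjN] using hb_nonneg j hj
  have hP1 : P 1 < 0 := by
    simpa [P, hc.tsum_eq] using Finset.sum_neg
      (fun j hj => mul_neg_of_pos_of_neg (hbN j hj) (sub_neg.2 (hv j hj).2)) hN
  have hrate : ∀ w ∈ Icc (0 : ℝ) 1,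
      (∑' j, if j ∈ N then 0 else b j * w ^ j) + ∑ j ∈ N, b j * v j * w ^ j = P w :=
    fun w hw => tsum_ite_mem_add_sum
      (summable_mul_pow hb.summable (abs_le.2 ⟨by linarith [hw.1], hw.2⟩))
  have hroots : IsLeast {w | w ∈ Icc (0 : ℝ) 1 ∧ P w = 0} ρv := by
    convert hρv using 3 with w
    exact and_congr_right fun hw => by rw [hrate w hw]
  have hP : IsStableEquilibriumOn P 0 1 ρv :=
    isStableEquilibriumOn_of_convexOn
      ((continuousOn_tsum_mul_pow hc.summable).mono (Icc_subset_Icc (by norm_num) le_rfl))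
      (convexOn_tsum_mul_pow hc.summable hc_nonneg)
      (by simpa [P, tsum_mul_zero_pow] using hc_nonneg 0 zero_ne_one) hP1 hroots
  have hy : ∀ t, 0 ≤ t → HasDerivWithinAt y (P (y t)) (Ici 0) t := fun t ht => by
    rw [← hrate _ (hymem t ht), add_comm]
    exact hyderiv t ht
  exact ⟨fun h => ⟨hP.monotoneOn_of_le hy hymem h.le, hP.tendsto_of_le hy hymem h.le⟩,
    fun h => ⟨hP.antitoneOn_of_ge hy hymem h.le, hP.tendsto_of_ge hy hymem h.le⟩,
    fun h t ht => (hP.le_of_le hy hymem h.le t ht).antisymm (hP.ge_of_ge hy hymem h.ge t ht)⟩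

/-- Let `v ∈ [0,1)^N`, `u ∈ [0,1]`, and `y : [0,∞) → [0,1]` differentiable
with `y(0) = u` and `y'(t) = B_N(y(t),v) + B̄_N(y(t))` for `t ≥ 0`. If `u < ρ(v)` then `y`
is monotone increasing on `[0,∞)` and `y(t) → ρ(v)`; if `u > ρ(v)` then `y` is monotone
decreasing on `[0,∞)` and `y(t) → ρ(v)`; if `u = ρ(v)` then `y(t) = ρ(v)` for all `t ≥ 0`. -/
theorem stmt_7
    (b : ℕ → ℝ)
    (hb_nonneg : ∀ j : ℕ, j ≠ 1 → 0 ≤ b j)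
    (hb1 : b 1 < 0)
    (hb_sum : HasSum (fun j : ℕ => if j = 1 then 0 else b j) (-(b 1)))
    (N : Finset ℕ) (hN : N.Nonempty) (h1N : (1 : ℕ) ∉ N)
    (hbN : ∀ k ∈ N, 0 < b k)
    (v : ℕ → ℝ) (hv : ∀ j ∈ N, v j ∈ Set.Ico (0 : ℝ) 1)
    (u : ℝ) (hu : u ∈ Set.Icc (0 : ℝ) 1)
    (ρv : ℝ)
    (hρv : IsLeast {w : ℝ | w ∈ Set.Icc (0 : ℝ) 1 ∧
        (∑' j : ℕ, if j ∈ N then 0 else b j * w ^ j)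
          + (∑ j ∈ N, b j * v j * w ^ j) = 0} ρv)
    (y : ℝ → ℝ)
    (hy0 : y 0 = u)
    (hymem : ∀ t : ℝ, 0 ≤ t → y t ∈ Set.Icc (0 : ℝ) 1)
    (hyderiv : ∀ t : ℝ, 0 ≤ t →
      HasDerivWithinAt y
        ((∑ j ∈ N, b j * v j * (y t) ^ j)
          + (∑' j : ℕ, if j ∈ N then 0 else b j * (y t) ^ j))
        (Set.Ici (0 : ℝ)) t) :
    (u < ρv → MonotoneOn y (Set.Ici (0 : ℝ)) ∧
      Filter.Tendsto y Filter.atTop (nhds ρv)) ∧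
    (ρv < u → AntitoneOn y (Set.Ici (0 : ℝ)) ∧
      Filter.Tendsto y Filter.atTop (nhds ρv)) ∧
    (u = ρv → ∀ t : ℝ, 0 ≤ t → y t = ρv) :=
  stmt_7_general b hb_nonneg hb_sum N hN hbN v hv u ρv hρv y hy0 hymem hyderiv
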